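/- Pufferfish privacy does not compose linearly in general: there exists a two-node Markov chain over states $\{0,1\}$ with transition probabilities $P(X_2 = 1 \mid X_1 = 1) = 0.9$ and $P(X_2 = 1 \mid X_1 = 0) = 0.01$, such that for the mechanism $M(X) = X_1 + X_2 + \mathrm{Lap}(1)$ and the secret pair $(X_1 = 0, X_1 = 1)$: if $\epsilon = \sup_w |\log S(w)|$ where $S(w) = \frac{p(M(X) = w \mid X_1 = 1)}{p(M(X) = w \mid X_1 = 0)}$, then releasing two independent copies $(M(X), M(X'))$ where $M$ is applied twice with independent noise to the same $X$, i.e., $(F(X) + Z_1, F(X) + Z_2)$, fails to satisfy $2\epsilon$-Pufferfish privacy: $\sup_{w} \left|\log \frac{p(F(X)+Z_1 = w, F(X)+Z_2 = w \mid X_1 = 1)}{p(F(X)+Z_1 = w, F(X)+Z_2 = w \mid X_1 = 0)}\right| > 2\epsilon$. Concretely, with $p = 0.9$, $q = 0.01$: $(\max_w \max\{S(w), 1/S(w)\})^2 = e^2 \cdot 6.2672\ldots$ while the two-release worst-case ratio is at least $e^2 \cdot 6.3448\ldots$. -/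

import Mathlib

/-!
A Laplace density `lap1` changes by a factor of at most `e` when its argument moves by `1`, so a
mixture of two neighbouring Laplace densities is within the factor
`worstRatio e p q = e (e p + 1 - p) / (e q + 1 - q)` of the mixture one step further on. The
reverse ratio is bounded by the smaller `worstRatio e (1 - q) (1 - p)`, so the single-release
privacy level is at most `log (worstRatio e 0.9 0.01)`. On the diagonal `(w, w)` the two-release
densities are mixtures of squared Laplace densities, and at `w = 2` their ratio is exactly
`worstRatio e² 0.9 0.01`. The identity
`(k² p + 1 - p) (k q + 1 - q)² - (k p + 1 - p)² (k² q + 1 - q)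
  = (p - q) (k - 1)² ((1 - p) (1 - q) - p q k²)`
gives `worstRatio k p q ^ 2 < worstRatio k² p q` whenever `p q k² < (1 - p) (1 - q)`,
which for `p = 0.9`, `q = 0.01` means `k² < 11`.
-/
/-- Density of the standard Laplace distribution `Lap(1)`. -/
noncomputable def lap1 (z : ℝ) : ℝ := (1 / 2) * Real.exp (-|z|)

/-- Density of `F(X) + Z` at `w` given `X₁ = 1`, for the two-node binary chain with
`P(X₂=1|X₁=1) = 0.9`, query `F(X) = X₁ + X₂` and `Z ∼ Lap(1)`. -/
noncomputable def dens1 (w : ℝ) : ℝ := lap1 (w - 2) * 0.9 + lap1 (w - 1) * (1 - 0.9)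

/-- Density of `F(X) + Z` at `w` given `X₁ = 0`, with `P(X₂=1|X₁=0) = 0.01`. -/
noncomputable def dens0 (w : ℝ) : ℝ := lap1 (w - 1) * 0.01 + lap1 w * (1 - 0.01)

/-- Joint density of `(F(X)+Z₁, F(X)+Z₂)` at `(w, w)` given `X₁ = 1`
(independent noises `Z₁, Z₂ ∼ Lap(1)`). -/
noncomputable def dens1Two (w : ℝ) : ℝ :=
  (lap1 (w - 2))^2 * 0.9 + (lap1 (w - 1))^2 * (1 - 0.9)

/-- Joint density of `(F(X)+Z₁, F(X)+Z₂)` at `(w, w)` given `X₁ = 0`. -/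
noncomputable def dens0Two (w : ℝ) : ℝ :=
  (lap1 (w - 1))^2 * 0.01 + (lap1 w)^2 * (1 - 0.01)

open Real

lemma lap1_pos (z : ℝ) : 0 < lap1 z := by
  unfold lap1; positivity

lemma lap1_le_exp_one_mul {a b : ℝ} (h : |a - b| ≤ 1) : lap1 a ≤ exp 1 * lap1 b := by
  have hab : |b| - |a| ≤ 1 := (abs_sub_abs_le_abs_sub b a).trans (abs_sub_comm b a ▸ h)
  unfold lap1
  rw [mul_left_comm, ← exp_add]
  gcongr
  linarith

/-- For `k = e` (resp. `k = e²`) this is the supremum of the likelihood ratio of a single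
release (resp. of two releases on the diagonal) of `F(X) + Lap(1)` for a two-state chain with
`P(X₂ = 1 | X₁ = 1) = p` and `P(X₂ = 1 | X₁ = 0) = q`. -/
noncomputable def worstRatio (k p q : ℝ) : ℝ := k * (k * p + (1 - p)) / (k * q + (1 - q))

lemma mix_le_worstRatio_mul {k a b c p q : ℝ} (hk : 0 ≤ k) (hab : a ≤ k * b)
    (hbc : b ≤ k * c) (hp₀ : 0 ≤ p) (hp₁ : p ≤ 1) (hq₀ : 0 ≤ q) (hq₁ : q < 1) :
    a * p + b * (1 - p) ≤ worstRatio k p q * (b * q + c * (1 - q)) := by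
  have hden : 0 < k * q + (1 - q) := by nlinarith
  have hnum : 0 ≤ k * p + (1 - p) := by nlinarith
  have hmix₁ : a * p + b * (1 - p) ≤ b * (k * p + (1 - p)) := by nlinarith
  have hmix₀ : b * (k * q + (1 - q)) ≤ k * (b * q + c * (1 - q)) := by nlinarith
  rw [worstRatio, div_mul_eq_mul_div, le_div_iff₀ hden]
  calc (a * p + b * (1 - p)) * (k * q + (1 - q))
      ≤ b * (k * p + (1 - p)) * (k * q + (1 - q)) := by gcongr
    _ = (k * p + (1 - p)) * (b * (k * q + (1 - q))) := by ring
    _ ≤ (k * p + (1 - p)) * (k * (b * q + c * (1 - q))) := by gcongr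
    _ = k * (k * p + (1 - p)) * (b * q + c * (1 - q)) := by ring

lemma worstRatio_one_sub_le {k p q : ℝ} (hk : 0 < k) (hq₀ : 0 < q) (hqp : q ≤ p)
    (hpq : p + q ≤ 1) : worstRatio k (1 - q) (1 - p) ≤ worstRatio k p q := by
  have hden : 0 < k * q + (1 - q) := by nlinarith
  have hden' : 0 < k * (1 - p) + (1 - (1 - p)) := by
    nlinarith [mul_nonneg hk.le (by linarith : (0 : ℝ) ≤ 1 - p)]
  have hgap : 0 ≤ k * (p - q) * (1 - p - q) * (k - 1) ^ 2 := by
    have : 0 ≤ p - q := by linarith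
    have : 0 ≤ 1 - p - q := by linarith
    positivity
  rw [worstRatio, worstRatio, div_le_div_iff₀ hden' hden]
  linear_combination hgap

lemma sq_worstRatio_lt {k p q : ℝ} (hk : 0 < k) (hk₁ : k ≠ 1) (hq₀ : 0 ≤ q) (hqp : q < p)
    (hp₁ : p ≤ 1) (hpqk : p * q * k ^ 2 < (1 - p) * (1 - q)) :
    worstRatio k p q ^ 2 < worstRatio (k ^ 2) p q := by
  have hden : 0 < k * q + (1 - q) := by nlinarith
  have hden₂ : 0 < k ^ 2 * q + (1 - q) := by nlinarith
  have hgap : 0 < k ^ 2 * (p - q) * (k - 1) ^ 2 * ((1 - p) * (1 - q) - p * q * k ^ 2) := by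
    have : 0 < (k - 1) ^ 2 := by positivity [sub_ne_zero.mpr hk₁]
    have : 0 < p - q := by linarith
    have : 0 < (1 - p) * (1 - q) - p * q * k ^ 2 := by linarith
    positivity
  rw [worstRatio, worstRatio, div_pow, div_lt_div_iff₀ (by positivity) hden₂]
  linear_combination hgap

lemma abs_log_div_le_log {x y M : ℝ} (hx : 0 < x) (hy : 0 < y) (hxy : x ≤ M * y)
    (hyx : y ≤ M * x) : |log (x / y)| ≤ log M := by
  have hM : 0 < M := pos_of_mul_pos_left (hx.trans_le hxy) hy.le
  rw [log_div hx.ne' hy.ne', abs_sub_le_iff, sub_le_iff_le_add, sub_le_iff_le_add,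
    ← log_mul hM.ne' hy.ne', ← log_mul hM.ne' hx.ne']
  exact ⟨log_le_log hx hxy, log_le_log hy hyx⟩

lemma abs_log_dens1_div_dens0_le (w : ℝ) :
    |log (dens1 w / dens0 w)| ≤ log (worstRatio (exp 1) 0.9 0.01) := by
  have he : 0 < exp 1 := exp_pos 1
  have h₂₁ : lap1 (w - 2) ≤ exp 1 * lap1 (w - 1) := lap1_le_exp_one_mul (by norm_num)
  have h₁₂ : lap1 (w - 1) ≤ exp 1 * lap1 (w - 2) := lap1_le_exp_one_mul (by norm_num)
  have h₁₀ : lap1 (w - 1) ≤ exp 1 * lap1 w := lap1_le_exp_one_mul (by norm_num)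
  have h₀₁ : lap1 w ≤ exp 1 * lap1 (w - 1) := lap1_le_exp_one_mul (by norm_num)
  have hd₁ : 0 < dens1 w := by unfold dens1; nlinarith [lap1_pos (w - 2), lap1_pos (w - 1)]
  have hd₀ : 0 < dens0 w := by unfold dens0; nlinarith [lap1_pos (w - 1), lap1_pos w]
  refine abs_log_div_le_log hd₁ hd₀ ?_ ?_
  · exact mix_le_worstRatio_mul he.le h₂₁ h₁₀ (by norm_num) (by norm_num) (by norm_num)
      (by norm_num)
  · have hswap := mix_le_worstRatio_mul (p := 1 - 0.01) (q := 1 - 0.9) he.le h₀₁ h₁₂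
      (by norm_num) (by norm_num) (by norm_num) (by norm_num)
    calc dens0 w
        = lap1 w * (1 - 0.01) + lap1 (w - 1) * (1 - (1 - 0.01)) := by unfold dens0; ring
      _ ≤ worstRatio (exp 1) (1 - 0.01) (1 - 0.9) *
            (lap1 (w - 1) * (1 - 0.9) + lap1 (w - 2) * (1 - (1 - 0.9))) := hswap
      _ = worstRatio (exp 1) (1 - 0.01) (1 - 0.9) * dens1 w := by unfold dens1; ring
      _ ≤ worstRatio (exp 1) 0.9 0.01 * dens1 w := by
        gcongr
        exact worstRatio_one_sub_le he (by norm_num) (by norm_num) (by norm_num)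

lemma dens1Two_two_div_dens0Two_two :
    dens1Two 2 / dens0Two 2 = worstRatio (exp 1 ^ 2) 0.9 0.01 := by
  have he : exp 1 ≠ 0 := (exp_pos 1).ne'
  have h₀ : lap1 (2 - 2) = 1 / 2 := by simp [lap1]
  have h₁ : lap1 (2 - 1) = 1 / 2 * (exp 1)⁻¹ := by norm_num [lap1, exp_neg]
  have h₂ : lap1 2 = 1 / 2 * (exp 1 ^ 2)⁻¹ := by
    norm_num [lap1, exp_neg, ← exp_nat_mul]
  unfold dens1Two dens0Two worstRatio
  rw [h₀, h₁, h₂]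
  field_simp

/-- **Pufferfish privacy does not compose linearly**: for the two-node binary Markov
chain with `p = 0.9`, `q = 0.01`, the mechanism `M(X) = X₁ + X₂ + Lap(1)` and the
secret pair `(X₁ = 0, X₁ = 1)`, if `ε = sup_w |log (dens1 w / dens0 w)|` is the
privacy level of a single release, then the two independent releases
`(F(X)+Z₁, F(X)+Z₂)` fail `2ε`-Pufferfish privacy: there is an output `w` where the
joint log-likelihood ratio exceeds `2ε` in absolute value. -/
theorem pufferfish_no_linear_composition :
    ∃ w : ℝ, |Real.log (dens1Two w / dens0Two w)| >
      2 * sSup { r : ℝ | ∃ w' : ℝ, r = |Real.log (dens1 w' / dens0 w')| } := by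
  set M := worstRatio (exp 1) 0.9 0.01
  have hlogM : 0 ≤ log M := (abs_nonneg _).trans (abs_log_dens1_div_dens0_le 0)
  have hsup : sSup { r : ℝ | ∃ w' : ℝ, r = |log (dens1 w' / dens0 w')| } ≤ log M := by
    refine Real.sSup_le ?_ hlogM
    rintro _ ⟨w', rfl⟩
    exact abs_log_dens1_div_dens0_le w'
  have hM : 0 < M := by unfold M worstRatio; positivity
  have he₁ : exp 1 ≠ 1 := by simp
  have hsq : M ^ 2 < dens1Two 2 / dens0Two 2 := by
    rw [dens1Two_two_div_dens0Two_two]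
    refine sq_worstRatio_lt (exp_pos 1) he₁ (by norm_num) (by norm_num) (by norm_num) ?_
    nlinarith [exp_one_lt_d9, exp_pos 1]
  refine ⟨2, ?_⟩
  calc 2 * sSup { r : ℝ | ∃ w' : ℝ, r = |log (dens1 w' / dens0 w')| }
      ≤ log (M ^ 2) := by rw [log_pow]; push_cast; linarith
    _ < log (dens1Two 2 / dens0Two 2) := log_lt_log (pow_pos hM 2) hsq
    _ ≤ |log (dens1Two 2 / dens0Two 2)| := le_abs_self _
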